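/- After applying QFT followed by the shift U_{m_u} on each factor of the GHZ state, the resulting state is supported exactly on basis vectors e_{b_1}⊗⋯⊗e_{b_t} with (b_1 - m_1) + ⋯ + (b_t - m_t) = 0 in ZMod d; equivalently b_1 + ⋯ + b_t = m_1 + ⋯ + m_t. -/

import Mathlib

/-!
Since `ω ^ n` only depends on `n mod d`, it is the standard additive character of `ZMod d`
evaluated at `n`. The product over the parties therefore collapses to the character at
`c * ∑ u, (b u - m u)`, and summing over `c` is the orthogonality relation for the primitive
character `ZMod.stdAddChar`: the sum is `d` when `∑ u, (b u - m u) = 0` and `0` otherwise.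
-/

open Complex Finset

namespace ZMod

variable {d : ℕ} [NeZero d]

lemma exp_two_pi_I_div_pow_eq_stdAddChar (n : ℕ) :
    exp (2 * Real.pi * I / d) ^ n = stdAddChar (n : ZMod d) := by
  rw [stdAddChar_apply, toCircle_natCast, ← exp_nat_mul]
  ring_nf

lemma prod_exp_two_pi_I_div_pow_val_mul_val {ι : Type*} [Fintype ι] (a : ι → ZMod d)
    (c : ZMod d) :
    ∏ u, exp (2 * Real.pi * I / d) ^ ((a u).val * c.val) = stdAddChar (c * ∑ u, a u) := by
  rw [prod_pow_eq_pow_sum, exp_two_pi_I_div_pow_eq_stdAddChar]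
  push_cast [natCast_zmod_val]
  rw [mul_comm c, sum_mul]

lemma sum_prod_mul_exp_two_pi_I_div_pow {ι : Type*} [Fintype ι] (a : ι → ZMod d) (s : ℂ) :
    ∑ c : ZMod d, ∏ u, (s * exp (2 * Real.pi * I / d) ^ ((a u).val * c.val)) =
      s ^ Fintype.card ι * if ∑ u, a u = 0 then (d : ℂ) else 0 := by
  simp_rw [prod_mul_distrib, prod_const, card_univ, prod_exp_two_pi_I_div_pow_val_mul_val,
    ← mul_sum, AddChar.sum_mulShift _ (isPrimitive_stdAddChar d), ZMod.card, Nat.cast_ite,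
    Nat.cast_zero]

end ZMod

theorem qsms_state_support_general (d t : ℕ) [NeZero d]
    (ω : ℂ) (hω : ω = Complex.exp (2 * Real.pi * Complex.I / d))
    (m : Fin t → ZMod d)
    (ψ : (Fin t → ZMod d) → ℂ)
    (hψ : ∀ b, ψ b = (1 / Real.sqrt d) *
      ∑ c : ZMod d, ∏ u, ((1 / Real.sqrt d : ℂ) * ω ^ ((b u - m u).val * c.val))) :
    ∀ b : Fin t → ZMod d, ψ b ≠ 0 ↔ ∑ u, b u = ∑ u, m u := by
  intro b
  simp only [hψ b, hω, ZMod.sum_prod_mul_exp_two_pi_I_div_pow, sum_sub_distrib, sub_eq_zero]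
  split_ifs with h <;> simp [h, NeZero.ne d]

theorem qsms_state_support (d t : ℕ) [NeZero d] (ht : 1 ≤ t)
    (ω : ℂ) (hω : ω = Complex.exp (2 * Real.pi * Complex.I / d))
    (m : Fin t → ZMod d)
    (ψ : (Fin t → ZMod d) → ℂ)
    (hψ : ∀ b, ψ b = (1 / Real.sqrt d) *
      ∑ c : ZMod d, ∏ u, ((1 / Real.sqrt d : ℂ) * ω ^ ((b u - m u).val * c.val))) :
    ∀ b : Fin t → ZMod d, ψ b ≠ 0 ↔ ∑ u, b u = ∑ u, m u :=
  qsms_state_support_general d t ω hω m ψ hψ
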